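/- arXiv:math/0504360 — 2 statements merged into one kernel-verified Lean document; each statement's English description precedes it below -/
import Mathlib

section
/- Let 𝔊 ⊆ GL(n,ℂ) be a finite subgroup acting on S = ℂ[X₁,…,Xₙ] by g·f = f ∘ g⁻¹, and let I ⊆ S be a 𝔊-cluster with I ⊆ ⟨X₁,…,Xₙ⟩. Then the zero locus V(I) = {p ∈ ℂⁿ : f(p) = 0 for all f ∈ I} equals {0}; that is, the cluster is supported at the origin. -/
open MvPolynomial

/-- The action of `g ∈ GL(n,ℂ)` on polynomials by `g · f = f ∘ g⁻¹`. -/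
noncomputable def actGL {n : ℕ} (g : GL (Fin n) ℂ) :
    MvPolynomial (Fin n) ℂ →ₐ[ℂ] MvPolynomial (Fin n) ℂ :=
  aeval fun i => ∑ j, ((g⁻¹ : GL (Fin n) ℂ) : Matrix (Fin n) (Fin n) ℂ) i j • X j

/-!
Suppose `q ≠ 0` lies in `V(I)`. Choose a linear form `h` vanishing at none of the finitely many
points `g⁻¹ q` and put `f = ∏_{g ∈ 𝔊} g · h`: it is `𝔊`-invariant, `f(0) = 0` and `f(q) ≠ 0`.
The invariants of the regular representation `ℂ[𝔊]` are the constant functions on `𝔊`, so the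
invariant classes `[f]` and `[1]` of `S/I ≅ ℂ[𝔊]` are proportional. Hence `f` is congruent modulo
`I` to a constant, which must be `f(0) = 0` because evaluation at the origin kills
`I ⊆ ⟨X₁,…,Xₙ⟩`. So `f ∈ I`, contradicting `f(q) ≠ 0`.
-/

open scoped Matrix

theorem MonoidAlgebra.coeff_eq_coeff_one_of_forall_single_mul_eq {k G : Type*} [Semiring k]
    [Group G] {x : MonoidAlgebra k G} (hx : ∀ g, single g 1 * x = x) (g : G) :
    x.coeff g = x.coeff 1 := by
  simpa using congr_arg (·.coeff g) (hx g) |>.symm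

theorem sub_algebraMap_mem_of_forall_map_eq_self {k R G : Type*} [CommRing k] [CommRing R]
    [Algebra k R] [Group G] {I : Ideal R} {ρ : G → R →ₐ[k] R}
    (e : (R ⧸ I) ≃ₗ[k] MonoidAlgebra k G)
    (he : ∀ g f, e (Ideal.Quotient.mk I (ρ g f)) =
      MonoidAlgebra.single g 1 * e (Ideal.Quotient.mk I f))
    (χ : R →ₐ[k] k) (hχ : ∀ f ∈ I, χ f = 0) {f : R} (hf : ∀ g, ρ g f = f) :
    f - algebraMap k R (χ f) ∈ I := by
  have hx := MonoidAlgebra.coeff_eq_coeff_one_of_forall_single_mul_eq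
    (x := e (Ideal.Quotient.mk I f)) fun g => by rw [← he, hf]
  have hy := MonoidAlgebra.coeff_eq_coeff_one_of_forall_single_mul_eq (x := e 1)
    fun g => by simpa using (he g 1).symm
  have hmem (c d : k) (h : c * (e (Ideal.Quotient.mk I f)).coeff 1 = d * (e 1).coeff 1) :
      c • f - algebraMap k R d ∈ I := by
    rw [← Ideal.Quotient.eq_zero_iff_mem, ← e.map_eq_zero_iff, Algebra.algebraMap_eq_smul_one,
      ← Ideal.Quotient.mkₐ_eq_mk k, map_sub, map_smul, map_smul, map_one, map_sub, map_smul,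
      map_smul, Ideal.Quotient.mkₐ_eq_mk]
    ext g
    simp [hx, hy, h]
  have hχf : (e 1).coeff 1 * χ f = (e (Ideal.Quotient.mk I f)).coeff 1 := by
    simpa [sub_eq_zero] using hχ _ (hmem _ _ (mul_comm _ _))
  simpa using hmem 1 (χ f) (by rw [one_mul, ← hχf, mul_comm])

theorem exists_eval_zero_eq_zero_and_forall_eval_ne_zero {K σ ι : Type*} [Field K]
    [Infinite K] [Fintype σ] [Finite ι] (v : ι → σ → K) (hv : ∀ i, v i ≠ 0) :
    ∃ h : MvPolynomial σ K, eval 0 h = 0 ∧ ∀ i, eval (v i) h ≠ 0 := by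
  classical
  obtain ⟨φ, hφ⟩ := Module.exists_dual_forall_apply_ne_zero (K := K) v hv
  refine ⟨∑ j, C (φ (Pi.single j 1)) * X j, by simp, fun i => ?_⟩
  convert hφ i using 1
  rw [φ.pi_apply_eq_sum_univ (v i)]
  simp only [map_sum, map_mul, eval_C, eval_X, smul_eq_mul, mul_comm]
  congr! with j _ k
  simp [Pi.single_apply, eq_comm]

theorem eval_zero_eq_zero_of_mem_span_X {R σ : Type*} [CommSemiring R]
    {f : MvPolynomial σ R} (hf : f ∈ Ideal.span (Set.range X)) : eval 0 f = 0 := by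
  refine (Ideal.span_le (I := RingHom.ker (eval 0)) |>.mpr ?_) hf
  rintro _ ⟨i, rfl⟩
  simp

section actGL

variable {n : ℕ}

theorem actGL_eq_bind₁ (g : GL (Fin n) ℂ) :
    actGL g = bind₁ (g⁻¹ : GL (Fin n) ℂ).val.toMvPolynomial := by
  rw [actGL, aeval_eq_bind₁]
  congr
  funext i
  simp [Matrix.toMvPolynomial, X, smul_monomial]

theorem actGL_mul (g k : GL (Fin n) ℂ) (f : MvPolynomial (Fin n) ℂ) :
    actGL (g * k) f = actGL g (actGL k f) := by
  simp only [actGL_eq_bind₁, bind₁_bind₁, mul_inv_rev, Units.val_mul]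
  congr 2
  funext i
  exact Matrix.toMvPolynomial_mul _ _ i

theorem eval_actGL (g : GL (Fin n) ℂ) (f : MvPolynomial (Fin n) ℂ) (q : Fin n → ℂ) :
    eval q (actGL g f) = eval ((g⁻¹ : GL (Fin n) ℂ).val *ᵥ q) f := by
  rw [actGL_eq_bind₁, eval, eval₂Hom_bind₁]
  congr
  funext i
  exact Matrix.toMvPolynomial_eval_eq_apply _ i q

theorem actGL_prod_actGL (G : Subgroup (GL (Fin n) ℂ)) [Fintype G] (h : MvPolynomial (Fin n) ℂ)
    (k : G) : actGL k (∏ g : G, actGL g h) = ∏ g : G, actGL g h := by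
  simp only [map_prod, ← actGL_mul]
  exact Fintype.prod_equiv (Equiv.mulLeft k) _ _ fun g => rfl

theorem exists_actGL_invariant_eval_ne_zero (G : Subgroup (GL (Fin n) ℂ)) [Fintype G]
    {q : Fin n → ℂ} (hq : q ≠ 0) :
    ∃ f, (∀ g : G, actGL g f = f) ∧ eval 0 f = 0 ∧ eval q f ≠ 0 := by
  have hgq (g : G) : ((g : GL (Fin n) ℂ)⁻¹).val *ᵥ q ≠ 0 := fun h => hq <| by
    simpa [Matrix.mulVec_mulVec] using congrArg ((g : GL (Fin n) ℂ).val *ᵥ ·) h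
  obtain ⟨h, h0, hne⟩ := exists_eval_zero_eq_zero_and_forall_eval_ne_zero _ hgq
  refine ⟨∏ g : G, actGL g h, ?_, ?_, ?_⟩
  · exact actGL_prod_actGL G h
  · rw [map_prod]
    exact Finset.prod_eq_zero (Finset.mem_univ 1) (by rw [eval_actGL, Matrix.mulVec_zero, h0])
  · rw [map_prod]
    exact Finset.prod_ne_zero_iff.mpr fun g _ => by rw [eval_actGL]; exact hne g

end actGL

theorem stmt5_general {n : ℕ} (Gg : Subgroup (GL (Fin n) ℂ)) [Fintype Gg]
    (I : Ideal (MvPolynomial (Fin n) ℂ))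
    (hreg : ∃ e : (MvPolynomial (Fin n) ℂ ⧸ I) ≃ₗ[ℂ] MonoidAlgebra ℂ Gg,
      ∀ (g : Gg) (f : MvPolynomial (Fin n) ℂ),
        e (Ideal.Quotient.mk I (actGL (g : GL (Fin n) ℂ) f)) =
          MonoidAlgebra.single g (1 : ℂ) * e (Ideal.Quotient.mk I f))
    (hI : I ≤ Ideal.span (Set.range (X : Fin n → MvPolynomial (Fin n) ℂ))) :
    {q : Fin n → ℂ | ∀ f ∈ I, eval q f = 0} = {0} := by
  ext q
  refine ⟨fun hq => ?_, fun hq f hf => hq ▸ eval_zero_eq_zero_of_mem_span_X (hI hf)⟩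
  by_contra hq0
  obtain ⟨e, he⟩ := hreg
  obtain ⟨f, hf, hf0, hfq⟩ := exists_actGL_invariant_eval_ne_zero Gg hq0
  have hI0 (p) (hp : p ∈ I) : aeval (0 : Fin n → ℂ) p = 0 := by
    simpa using eval_zero_eq_zero_of_mem_span_X (hI hp)
  have hfI : f ∈ I := by
    simpa [← eval_zero, hf0] using sub_algebraMap_mem_of_forall_map_eq_self e he _ hI0 hf
  exact hfq (hq f hfI)

/-- For a finite subgroup `𝔊 ⊆ GL(n,ℂ)` and a `𝔊`-cluster `I ⊆ ⟨X₁,…,Xₙ⟩`, the zero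
locus `V(I)` equals `{0}`: the cluster is supported at the origin. -/
theorem stmt5 {n : ℕ} (Gg : Subgroup (GL (Fin n) ℂ)) [Fintype Gg]
    (I : Ideal (MvPolynomial (Fin n) ℂ))
    (hstab : ∀ g ∈ Gg, ∀ f ∈ I, actGL g f ∈ I)
    (hreg : ∃ e : (MvPolynomial (Fin n) ℂ ⧸ I) ≃ₗ[ℂ] MonoidAlgebra ℂ Gg,
      ∀ (g : Gg) (f : MvPolynomial (Fin n) ℂ),
        e (Ideal.Quotient.mk I (actGL (g : GL (Fin n) ℂ) f)) =
          MonoidAlgebra.single g (1 : ℂ) * e (Ideal.Quotient.mk I f))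
    (hI : I ≤ Ideal.span (Set.range (X : Fin n → MvPolynomial (Fin n) ℂ))) :
    {q : Fin n → ℂ | ∀ f ∈ I, eval q f = 0} = {0} :=
  stmt5_general Gg I hreg hI
end

section
/- Fix n ≥ 1 and a primitive 2n-th root of unity ξ ∈ ℂ, and let the binary cyclic group C̃_n ≅ ℤ/2nℤ act on ℂ[x,y] with a chosen generator acting by x ↦ ξx, y ↦ ξ⁻¹y. An ideal I ⊆ ⟨x,y⟩ of ℂ[x,y] is a C̃_n-cluster if and only if there exist an integer j with 1 ≤ j ≤ 2n−1 and (p,q) ∈ ℂ² with (p,q) ≠ (0,0) such that I = ⟨p·xʲ − q·y^{2n−j}, xy, x^{j+1}, y^{2n−j+1}⟩. -/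
/-!
A monomial `xᵃyᵇ` is an eigenvector of the generator with eigenvalue `ξᵃ⁻ᵇ`, and in the regular
representation of `ℤ/Nℤ` (`N = 2n`) the shift by `1` has every `N`-th root of unity as an
eigenvalue of multiplicity one. So for a cluster `I ⊆ ⟨x,y⟩` each weight space of `ℂ[x,y]/I` is a
line: the invariant monomials `xy`, `xᴺ`, `yᴺ` are proportional to `1 ∉ I`, hence lie in `I`, and
`xʲ`, `yᴺ⁻ʲ` satisfy a relation `p·xʲ = q·yᴺ⁻ʲ` mod `I`. Multiplying such a relation by `y` shows
that `yᴺ⁻ʲ⁺¹ ∈ I` as soon as `xʲ ∉ I`; taking `j` least with `xʲ⁺¹ ∈ I` puts all four generators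
of `J = ⟨p·xʲ - q·yᴺ⁻ʲ, xy, xʲ⁺¹, yᴺ⁻ʲ⁺¹⟩` in `I`, and `I = J` because both quotients have
dimension `N`.

Conversely, sending the `N` monomials `1, x, …, xʲ⁻¹, y, …, yᴺ⁻ʲ⁻¹` and `xʲ` (or `yᴺ⁻ʲ`) to the
eigenvectors of the shift with the same eigenvalues gives an equivariant linear map
`ℂ[x,y] → ℂ[ℤ/Nℤ]` with kernel exactly `J`; the eigenvectors form a basis since their
eigenvalues are distinct.
-/

open MvPolynomial

/-- The generator of the binary cyclic group action on `ℂ[x,y]`: `x ↦ ξx`, `y ↦ ξ⁻¹y`. -/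
noncomputable def cycAct2 (ξ : ℂ) :
    MvPolynomial (Fin 2) ℂ →ₐ[ℂ] MvPolynomial (Fin 2) ℂ :=
  aeval ![C ξ * X 0, C ξ⁻¹ * X 1]

open Finset

local notation "𝒫" => MvPolynomial (Fin 2) ℂ

namespace AddMonoidAlgebra

variable {R : Type*} {N : ℕ}

lemma eq_zero_of_single_one_mul_eq_smul [NeZero N] [Ring R] {u : AddMonoidAlgebra R (ZMod N)}
    {c : R} (h : single 1 1 * u = c • u) (h0 : u.coeff 0 = 0) : u = 0 := by
  have step (k : ZMod N) : u.coeff (k - 1) = c * u.coeff k := by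
    simpa [coeff_single_mul_apply, neg_add_eq_sub] using congrArg (fun z => z.coeff k) h
  have coeff_neg_natCast (m : ℕ) : u.coeff (-(m : ZMod N)) = 0 := by
    induction m with
    | zero => simpa using h0
    | succ m ih => rw [Nat.cast_succ, neg_add, ← sub_eq_add_neg, step, ih, mul_zero]
  ext k
  simpa using coeff_neg_natCast (-k).val

lemma exists_smul_eq_smul_of_single_one_mul_eq_smul [NeZero N] [CommRing R] [Nontrivial R]
    {u u' : AddMonoidAlgebra R (ZMod N)} {c : R}
    (h : single 1 1 * u = c • u) (h' : single 1 1 * u' = c • u') :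
    ∃ α β : R, (α, β) ≠ (0, 0) ∧ α • u = β • u' := by
  by_cases hu : u.coeff 0 = 0
  · exact ⟨1, 0, by simp, by simp [eq_zero_of_single_one_mul_eq_smul h hu]⟩
  refine ⟨u'.coeff 0, u.coeff 0, by simp [hu], sub_eq_zero.1 ?_⟩
  refine eq_zero_of_single_one_mul_eq_smul (c := c) ?_ (by simp [mul_comm])
  rw [mul_sub, mul_smul_comm, mul_smul_comm, h, h', smul_sub, smul_comm c, smul_comm c]

noncomputable def rootEigenvector (N : ℕ) [Semiring R] (c : R) : AddMonoidAlgebra R (ZMod N) :=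
  ∑ i ∈ range N, single (i : ZMod N) (c ^ (N - 1 - i))

lemma single_one_mul_rootEigenvector [CommRing R] {c : R} (hc : c ^ N = 1) :
    single 1 1 * rootEigenvector N c = c • rootEigenvector N c := by
  have geom : rootEigenvector N c * (single 1 1 - algebraMap R _ c) = 0 := by
    have : rootEigenvector N c =
        ∑ i ∈ range N, single (1 : ZMod N) (1 : R) ^ i * algebraMap R _ c ^ (N - 1 - i) := by
      simp [rootEigenvector, single_pow]
    rw [this, geom_sum₂_mul, single_pow, ← map_pow, hc]
    simp
  rw [mul_sub, sub_eq_zero, mul_comm] at geom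
  rw [Algebra.smul_def, geom, mul_comm]

lemma coeff_zero_rootEigenvector [NeZero N] [Semiring R] (c : R) :
    (rootEigenvector N c).coeff 0 = c ^ (N - 1) := by
  rw [rootEigenvector, coeff_sum, Finsupp.finsetSum_apply, Finset.sum_eq_single 0]
  · simp
  · intro i hi hi0
    rw [coeff_single, Finsupp.single_apply, if_neg]
    rw [ZMod.natCast_eq_zero_iff]
    exact fun h => hi0 (Nat.eq_zero_of_dvd_of_lt h (mem_range.1 hi))
  · simp [NeZero.ne]

variable [NeZero N] {ξ : ℂ}

lemma linearIndependent_rootEigenvector (hξ : IsPrimitiveRoot ξ N) :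
    LinearIndependent ℂ fun i : Fin N => rootEigenvector N (ξ ^ (i : ℕ)) := by
  refine Module.End.eigenvectors_linearIndependent' (LinearMap.mulLeft ℂ (single 1 1))
    (fun i : Fin N => ξ ^ (i : ℕ)) (fun i k h => Fin.ext (hξ.pow_inj i.2 k.2 h)) _ fun i => ?_
  refine Module.End.hasEigenvector_iff.2 ⟨Module.End.mem_eigenspace_iff.2 ?_, fun h0 => ?_⟩
  · exact single_one_mul_rootEigenvector
      (by rw [← pow_mul, mul_comm, pow_mul, hξ.pow_eq_one, one_pow])
  · have := coeff_zero_rootEigenvector (N := N) (ξ ^ (i : ℕ))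
    rw [h0] at this
    exact pow_ne_zero _ (pow_ne_zero _ (hξ.ne_zero (NeZero.ne N))) this.symm

lemma span_rootEigenvector (hξ : IsPrimitiveRoot ξ N) :
    Submodule.span ℂ (Set.range fun i : Fin N => rootEigenvector N (ξ ^ (i : ℕ))) = ⊤ :=
  (linearIndependent_rootEigenvector hξ).span_eq_top_of_card_eq_finrank' <| by
    simp [Module.finrank_eq_card_basis (AddMonoidAlgebra.basis (ZMod N) ℂ)]

end AddMonoidAlgebra

open AddMonoidAlgebra

lemma Ideal.map_eq_zero_of_mem_span {R M : Type*} [CommSemiring R] [AddCommMonoid M]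
    (Φ : R →+ M) {s : Set R} (h : ∀ g ∈ s, ∀ f, Φ (f * g) = 0) :
    ∀ x ∈ Ideal.span s, Φ x = 0 := by
  suffices ∀ x ∈ Ideal.span s, ∀ f, Φ (f * x) = 0 from fun x hx => by simpa using this x hx 1
  intro x hx
  induction hx using Submodule.span_induction with
  | mem g hg => exact h g hg
  | zero => simp
  | add x y _ _ hx hy => intro f; rw [mul_add, map_add, hx, hy, add_zero]
  | smul r x _ hx => intro f; rw [smul_eq_mul, ← mul_assoc, hx]

lemma Ideal.eq_of_le_of_finrank_quotient_eq {k R : Type*} [Field k] [CommRing R] [Algebra k R]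
    {J I : Ideal R} [FiniteDimensional k (R ⧸ J)] (hJI : J ≤ I)
    (h : Module.finrank k (R ⧸ J) = Module.finrank k (R ⧸ I)) : J = I := by
  have hsurj : Function.Surjective (Ideal.Quotient.factorₐ k hJI).toLinearMap :=
    Ideal.Quotient.factor_surjective hJI
  have : FiniteDimensional k (R ⧸ I) := Module.Finite.of_surjective _ hsurj
  have hinj := (LinearMap.injective_iff_surjective_of_finrank_eq_finrank h).2 hsurj
  refine le_antisymm hJI fun f hf => ?_
  rw [← Ideal.Quotient.eq_zero_iff_mem] at hf ⊢
  exact hinj (by simpa using hf)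

lemma MvPolynomial.constantCoeff_eq_zero_of_mem_span_X {σ R : Type*} [CommSemiring R]
    {f : MvPolynomial σ R} (hf : f ∈ Ideal.span (Set.range X)) : constantCoeff f = 0 :=
  (Ideal.span_le (I := RingHom.ker constantCoeff)).2 (by rintro _ ⟨i, rfl⟩; simp) hf

section Monomials

lemma X_pow_mul_X_pow_eq_monomial (a b : ℕ) :
    (X 0 ^ a * X 1 ^ b : 𝒫) = monomial (Finsupp.single 0 a + Finsupp.single 1 b) 1 := by
  rw [X_pow_eq_monomial, X_pow_eq_monomial, monomial_mul, one_mul]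

lemma monomial_eq_C_mul_X_pow_mul_X_pow (d : Fin 2 →₀ ℕ) (r : ℂ) :
    (monomial d r : 𝒫) = C r * (X 0 ^ d 0 * X 1 ^ d 1) := by
  rw [monomial_eq, Finsupp.prod_fintype _ _ (by simp), Fin.prod_univ_two]

lemma linearMap_ext_X_pow_mul_X_pow {M : Type*} [AddCommMonoid M] [Module ℂ M]
    {L L' : 𝒫 →ₗ[ℂ] M} (h : ∀ a b, L (X 0 ^ a * X 1 ^ b) = L' (X 0 ^ a * X 1 ^ b)) :
    L = L' :=
  linearMap_ext fun d => LinearMap.ext_ring <| by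
    simpa [monomial_eq_C_mul_X_pow_mul_X_pow] using h (d 0) (d 1)

lemma LinearMap.map_mul_eq_zero_of_forall_X_pow_mul_X_pow {M : Type*} [AddCommMonoid M]
    [Module ℂ M] (L : 𝒫 →ₗ[ℂ] M) {g : 𝒫} (h : ∀ a b, L (X 0 ^ a * X 1 ^ b * g) = 0) (f : 𝒫) :
    L (f * g) = 0 :=
  LinearMap.congr_fun (linearMap_ext_X_pow_mul_X_pow (L := L ∘ₗ LinearMap.mulRight ℂ g) (L' := 0)
    (by simpa using h)) f

lemma cycAct2_X_pow_mul_X_pow (ξ : ℂ) (a b : ℕ) :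
    cycAct2 ξ (X 0 ^ a * X 1 ^ b) = (ξ ^ a * ξ⁻¹ ^ b) • (X 0 ^ a * X 1 ^ b : 𝒫) := by
  simp only [cycAct2, map_mul, map_pow, aeval_X, smul_eq_C_mul, Matrix.cons_val_zero,
    Matrix.cons_val_one, Matrix.cons_val_fin_one]
  ring

end Monomials

section RootsOfUnity

variable {ξ : ℂ} {N : ℕ}

lemma pow_mul_inv_pow_pow_eq_one (hξ : ξ ^ N = 1) (a b : ℕ) : (ξ ^ a * ξ⁻¹ ^ b) ^ N = 1 := by
  rw [mul_pow, ← pow_mul, ← pow_mul, mul_comm a, mul_comm b, pow_mul, pow_mul, inv_pow, hξ]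
  simp

lemma inv_pow_sub_eq_pow (hξ : ξ ^ N = 1) {j : ℕ} (hj : j ≤ N) : ξ⁻¹ ^ (N - j) = ξ ^ j := by
  have h : ξ ^ (N - j) * ξ ^ j = 1 := by rw [← pow_add, Nat.sub_add_cancel hj, hξ]
  rw [inv_pow, eq_inv_of_mul_eq_one_left h, inv_inv]

end RootsOfUnity

/-- `I` is a `Γ`-cluster for `Γ = ℤ/Nℤ` acting through `cycAct2 ξ`: equivariance of the
isomorphism with the regular representation is tested on the generator `1 ∈ ℤ/Nℤ`. -/
def IsCluster (ξ : ℂ) (N : ℕ) (I : Ideal 𝒫) : Prop :=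
  (∀ f ∈ I, cycAct2 ξ f ∈ I) ∧
    ∃ e : (𝒫 ⧸ I) ≃ₗ[ℂ] AddMonoidAlgebra ℂ (ZMod N),
      ∀ f : 𝒫, e (Ideal.Quotient.mk I (cycAct2 ξ f)) =
        single (1 : ZMod N) (1 : ℂ) * e (Ideal.Quotient.mk I f)

noncomputable def clusterIdeal (N j : ℕ) (p q : ℂ) : Ideal 𝒫 :=
  Ideal.span {C p * X 0 ^ j - C q * X 1 ^ (N - j), X 0 * X 1, X 0 ^ (j + 1), X 1 ^ (N - j + 1)}

/-- `clusterMap` sends `xᵃyᵇ` to this multiple of the eigenvector of weight `a - b`; the factors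
`q`, `p` at `xʲ`, `yᴺ⁻ʲ` make it kill `p·xʲ - q·yᴺ⁻ʲ`. -/
noncomputable def clusterCoeff (N j : ℕ) (p q : ℂ) (a b : ℕ) : ℂ :=
  if b = 0 then (if a < j then 1 else if a = j then q else 0)
  else if a = 0 then (if b < N - j then 1 else if b = N - j then p else 0) else 0

noncomputable def clusterMap (ξ : ℂ) (N j : ℕ) (p q : ℂ) :
    𝒫 →ₗ[ℂ] AddMonoidAlgebra ℂ (ZMod N) :=
  (basisMonomials (Fin 2) ℂ).constr ℂ fun d =>
    clusterCoeff N j p q (d 0) (d 1) • rootEigenvector N (ξ ^ d 0 * ξ⁻¹ ^ d 1)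

noncomputable def clusterRep (N j : ℕ) (p q : ℂ) (k : ℕ) : 𝒫 :=
  if k < j then X 0 ^ k
  else if j < k then X 1 ^ (N - k)
  else if q = 0 then C p⁻¹ * X 1 ^ (N - j) else C q⁻¹ * X 0 ^ j

section ClusterIdeal

variable {ξ : ℂ} {N j : ℕ} {p q : ℂ}

lemma X_pow_mul_X_pow_mem_clusterIdeal {a b : ℕ} (ha : 1 ≤ a) (hb : 1 ≤ b) :
    X 0 ^ a * X 1 ^ b ∈ clusterIdeal N j p q := by
  have : (X 0 ^ a * X 1 ^ b : 𝒫) = X 0 ^ (a - 1) * X 1 ^ (b - 1) * (X 0 * X 1) := by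
    rw [mul_mul_mul_comm, ← pow_succ, ← pow_succ, Nat.sub_add_cancel ha, Nat.sub_add_cancel hb]
  rw [this]
  exact Ideal.mul_mem_left _ _ (Ideal.subset_span (by simp))

lemma X0_pow_mem_clusterIdeal {a : ℕ} (ha : j < a) : X 0 ^ a ∈ clusterIdeal N j p q := by
  rw [← Nat.sub_add_cancel ha, pow_add]
  exact Ideal.mul_mem_left _ _ (Ideal.subset_span (by simp))

lemma X1_pow_mem_clusterIdeal {b : ℕ} (hb : N - j < b) : X 1 ^ b ∈ clusterIdeal N j p q := by
  rw [← Nat.sub_add_cancel hb, pow_add]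
  exact Ideal.mul_mem_left _ _ (Ideal.subset_span (by simp))

lemma C_mul_sub_C_mul_mem_clusterIdeal :
    C p * X 0 ^ j - C q * X 1 ^ (N - j) ∈ clusterIdeal N j p q :=
  Ideal.subset_span (by simp)

lemma clusterCoeff_eq_zero {a b : ℕ} (h : j < a ∨ N - j < b ∨ (a ≠ 0 ∧ b ≠ 0)) :
    clusterCoeff N j p q a b = 0 := by
  unfold clusterCoeff; split_ifs <;> first | rfl | omega

lemma clusterMap_X_pow_mul_X_pow (a b : ℕ) :
    clusterMap ξ N j p q (X 0 ^ a * X 1 ^ b) =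
      clusterCoeff N j p q a b • rootEigenvector N (ξ ^ a * ξ⁻¹ ^ b) := by
  rw [X_pow_mul_X_pow_eq_monomial]
  exact ((basisMonomials (Fin 2) ℂ).constr_basis ℂ _ _).trans (by simp)

lemma clusterMap_cycAct2 (hξ : ξ ^ N = 1) (f : 𝒫) :
    clusterMap ξ N j p q (cycAct2 ξ f) = single 1 1 * clusterMap ξ N j p q f := by
  refine LinearMap.congr_fun (linearMap_ext_X_pow_mul_X_pow
    (L := clusterMap ξ N j p q ∘ₗ (cycAct2 ξ).toLinearMap)
    (L' := LinearMap.mulLeft ℂ (single 1 1) ∘ₗ clusterMap ξ N j p q) fun a b => ?_) f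
  simp only [LinearMap.comp_apply, AlgHom.toLinearMap_apply, LinearMap.mulLeft_apply,
    cycAct2_X_pow_mul_X_pow, map_smul, clusterMap_X_pow_mul_X_pow,
    single_one_mul_rootEigenvector (pow_mul_inv_pow_pow_eq_one hξ a b), smul_comm (ξ ^ a * ξ⁻¹ ^ b)]

lemma clusterMap_eq_zero_of_mem (hξ : ξ ^ N = 1) (hj1 : 1 ≤ j) (hj : j < N) :
    ∀ f ∈ clusterIdeal N j p q, clusterMap ξ N j p q f = 0 := by
  refine Ideal.map_eq_zero_of_mem_span (clusterMap ξ N j p q).toAddMonoidHom ?_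
  simp only [Set.mem_insert_iff, Set.mem_singleton_iff]
  rintro g (rfl | rfl | rfl | rfl) <;>
    refine (clusterMap ξ N j p q).map_mul_eq_zero_of_forall_X_pow_mul_X_pow fun a b => ?_
  · have hprod : X 0 ^ a * X 1 ^ b * (C p * X 0 ^ j - C q * X 1 ^ (N - j)) =
        p • (X 0 ^ (a + j) * X 1 ^ b) - q • (X 0 ^ a * X 1 ^ (b + (N - j)) : 𝒫) := by
      simp only [smul_eq_C_mul]; ring
    have hweight : ξ ^ (a + j) * ξ⁻¹ ^ b = ξ ^ a * ξ⁻¹ ^ (b + (N - j)) := by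
      rw [pow_add, pow_add, inv_pow_sub_eq_pow hξ hj.le]; ring
    have hcoeff :
        p * clusterCoeff N j p q (a + j) b = q * clusterCoeff N j p q a (b + (N - j)) := by
      unfold clusterCoeff; split_ifs <;> first | omega | ring
    rw [hprod]
    simp only [map_sub, map_smul, clusterMap_X_pow_mul_X_pow, smul_smul, hweight, hcoeff,
      sub_self]
  · rw [show X 0 ^ a * X 1 ^ b * (X 0 * X 1) = (X 0 ^ (a + 1) * X 1 ^ (b + 1) : 𝒫) by ring]
    simp [clusterMap_X_pow_mul_X_pow, clusterCoeff_eq_zero]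
  · rw [show X 0 ^ a * X 1 ^ b * X 0 ^ (j + 1) = (X 0 ^ (a + (j + 1)) * X 1 ^ b : 𝒫) by ring]
    have h0 : clusterCoeff N j p q (a + (j + 1)) b = 0 := clusterCoeff_eq_zero (Or.inl (by omega))
    simp [clusterMap_X_pow_mul_X_pow, h0]
  · rw [show X 0 ^ a * X 1 ^ b * X 1 ^ (N - j + 1) = (X 0 ^ a * X 1 ^ (b + (N - j + 1)) : 𝒫) by
      ring]
    have h0 : clusterCoeff N j p q a (b + (N - j + 1)) = 0 :=
      clusterCoeff_eq_zero (Or.inr (Or.inl (by omega)))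
    simp [clusterMap_X_pow_mul_X_pow, h0]

lemma clusterMap_clusterRep (hξ : ξ ^ N = 1) (hj : j < N) (hpq : (p, q) ≠ (0, 0)) {k : ℕ}
    (hk : k < N) : clusterMap ξ N j p q (clusterRep N j p q k) = rootEigenvector N (ξ ^ k) := by
  have hx (a : ℕ) : (X 0 ^ a : 𝒫) = X 0 ^ a * X 1 ^ 0 := by simp
  have hy (b : ℕ) : (X 1 ^ b : 𝒫) = X 0 ^ 0 * X 1 ^ b := by simp
  unfold clusterRep
  split_ifs with hkj hjk hq
  · rw [hx, clusterMap_X_pow_mul_X_pow, clusterCoeff, if_pos rfl, if_pos hkj]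
    simp
  · rw [hy, clusterMap_X_pow_mul_X_pow, clusterCoeff, if_neg (by omega), if_pos rfl,
      if_pos (by omega), inv_pow_sub_eq_pow hξ hk.le]
    simp
  · have hp : p ≠ 0 := fun hp => hpq (by simp [hp, hq])
    rw [← smul_eq_C_mul, map_smul, hy, clusterMap_X_pow_mul_X_pow, clusterCoeff,
      if_neg (by omega), if_pos rfl, if_neg (by omega), if_pos rfl, inv_pow_sub_eq_pow hξ hj.le,
      smul_smul, inv_mul_cancel₀ hp, one_smul, pow_zero, one_mul, show k = j by omega]
  · rw [← smul_eq_C_mul, map_smul, hx, clusterMap_X_pow_mul_X_pow, clusterCoeff, if_pos rfl,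
      if_neg (lt_irrefl j), if_pos rfl, smul_smul, inv_mul_cancel₀ hq, one_smul, pow_zero,
      mul_one, show k = j by omega]

lemma X0_pow_mem_span_clusterRep_sup (hj : j < N) (hpq : (p, q) ≠ (0, 0)) (a : ℕ) :
    X 0 ^ a ∈ Submodule.span ℂ (Set.range fun k : Fin N => clusterRep N j p q k) ⊔
      (clusterIdeal N j p q).restrictScalars ℂ := by
  have rep_mem (k : ℕ) (hk : k < N) : clusterRep N j p q k ∈
      Submodule.span ℂ (Set.range fun k : Fin N => clusterRep N j p q k) :=
    Submodule.subset_span ⟨⟨k, hk⟩, rfl⟩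
  rcases lt_trichotomy a j with haj | rfl | hja
  · refine Submodule.mem_sup_left ?_
    simpa [clusterRep, haj] using rep_mem a (by omega)
  · by_cases hq : q = 0
    · have hp : p ≠ 0 := fun hp => hpq (by simp [hp, hq])
      refine Submodule.mem_sup_right ?_
      have : (X 0 ^ a : 𝒫) = C p⁻¹ * (C p * X 0 ^ a - C q * X 1 ^ (N - a)) := by
        rw [hq, C_0, zero_mul, sub_zero, ← mul_assoc, ← C_mul, inv_mul_cancel₀ hp, C_1, one_mul]
      rw [this]
      exact Ideal.mul_mem_left _ _ C_mul_sub_C_mul_mem_clusterIdeal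
    · refine Submodule.mem_sup_left ?_
      have : (X 0 ^ a : 𝒫) = q • clusterRep N a p q a := by
        simp [clusterRep, hq, smul_eq_C_mul, ← mul_assoc, ← C_mul]
      rw [this]
      exact Submodule.smul_mem _ _ (rep_mem a hj)
  · exact Submodule.mem_sup_right (X0_pow_mem_clusterIdeal hja)

lemma X1_pow_mem_span_clusterRep_sup (hj : j < N) (hpq : (p, q) ≠ (0, 0)) {b : ℕ} (hb : 1 ≤ b) :
    X 1 ^ b ∈ Submodule.span ℂ (Set.range fun k : Fin N => clusterRep N j p q k) ⊔
      (clusterIdeal N j p q).restrictScalars ℂ := by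
  have rep_mem (k : ℕ) (hk : k < N) : clusterRep N j p q k ∈
      Submodule.span ℂ (Set.range fun k : Fin N => clusterRep N j p q k) :=
    Submodule.subset_span ⟨⟨k, hk⟩, rfl⟩
  rcases lt_trichotomy b (N - j) with hbj | rfl | hjb
  · refine Submodule.mem_sup_left ?_
    have : clusterRep N j p q (N - b) = X 1 ^ b := by
      rw [clusterRep, if_neg (by omega), if_pos (by omega), Nat.sub_sub_self (by omega)]
    rw [← this]
    exact rep_mem _ (by omega)
  · have hrep : clusterRep N j p q j =
        if q = 0 then C p⁻¹ * X 1 ^ (N - j) else C q⁻¹ * X 0 ^ j := by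
      simp [clusterRep]
    by_cases hq : q = 0
    · have hp : p ≠ 0 := fun hp => hpq (by simp [hp, hq])
      refine Submodule.mem_sup_left ?_
      have : (X 1 ^ (N - j) : 𝒫) = p • clusterRep N j p q j := by
        rw [hrep, if_pos hq, smul_eq_C_mul, ← mul_assoc, ← C_mul, mul_inv_cancel₀ hp, C_1, one_mul]
      rw [this]
      exact Submodule.smul_mem _ _ (rep_mem j hj)
    · have hC : C q⁻¹ * C q = (1 : 𝒫) := by rw [← C_mul, inv_mul_cancel₀ hq, C_1]
      have : (X 1 ^ (N - j) : 𝒫) = p • clusterRep N j p q j -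
          C q⁻¹ * (C p * X 0 ^ j - C q * X 1 ^ (N - j)) := by
        rw [hrep, if_neg hq, smul_eq_C_mul]
        linear_combination (-X 1 ^ (N - j) : 𝒫) * hC
      rw [this]
      exact Submodule.sub_mem _ (Submodule.mem_sup_left (Submodule.smul_mem _ _ (rep_mem j hj)))
        (Submodule.mem_sup_right (Ideal.mul_mem_left _ _ C_mul_sub_C_mul_mem_clusterIdeal))
  · exact Submodule.mem_sup_right (X1_pow_mem_clusterIdeal hjb)

lemma mem_span_clusterRep_sup (hj : j < N) (hpq : (p, q) ≠ (0, 0)) (f : 𝒫) :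
    f ∈ Submodule.span ℂ (Set.range fun k : Fin N => clusterRep N j p q k) ⊔
      (clusterIdeal N j p q).restrictScalars ℂ := by
  induction f using MvPolynomial.induction_on' with
  | monomial d r =>
    rw [monomial_eq_C_mul_X_pow_mul_X_pow, ← smul_eq_C_mul]
    refine Submodule.smul_mem _ _ ?_
    rcases Nat.eq_zero_or_pos (d 1) with hb | hb
    · simpa [hb] using X0_pow_mem_span_clusterRep_sup hj hpq (d 0)
    rcases Nat.eq_zero_or_pos (d 0) with ha | ha
    · simpa [ha] using X1_pow_mem_span_clusterRep_sup hj hpq hb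
    exact Submodule.mem_sup_right (X_pow_mul_X_pow_mem_clusterIdeal ha hb)
  | add f g hf hg => exact Submodule.add_mem _ hf hg

variable [NeZero N]

lemma clusterMap_eq_zero_iff (hξ : IsPrimitiveRoot ξ N) (hj1 : 1 ≤ j) (hj : j < N)
    (hpq : (p, q) ≠ (0, 0)) (f : 𝒫) : clusterMap ξ N j p q f = 0 ↔ f ∈ clusterIdeal N j p q := by
  refine ⟨fun hf => ?_, clusterMap_eq_zero_of_mem hξ.pow_eq_one hj1 hj f⟩
  obtain ⟨s, hs, z, hz, rfl⟩ := Submodule.mem_sup.1 (mem_span_clusterRep_sup hj hpq f)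
  obtain ⟨c, rfl⟩ := (Submodule.mem_span_range_iff_exists_fun ℂ).1 hs
  rw [map_add, clusterMap_eq_zero_of_mem hξ.pow_eq_one hj1 hj z hz, add_zero, map_sum] at hf
  simp_rw [map_smul, clusterMap_clusterRep hξ.pow_eq_one hj hpq (Fin.is_lt _)] at hf
  have hc := Fintype.linearIndependent_iff.1 (linearIndependent_rootEigenvector hξ) c hf
  simpa [hc] using hz

lemma clusterMap_surjective (hξ : IsPrimitiveRoot ξ N) (hj : j < N) (hpq : (p, q) ≠ (0, 0)) :
    Function.Surjective (clusterMap ξ N j p q) := by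
  rw [← LinearMap.range_eq_top, eq_top_iff, ← span_rootEigenvector hξ, Submodule.span_le]
  rintro _ ⟨k, rfl⟩
  exact ⟨_, clusterMap_clusterRep hξ.pow_eq_one hj hpq k.is_lt⟩

theorem isCluster_clusterIdeal (hξ : IsPrimitiveRoot ξ N) (hj1 : 1 ≤ j) (hj : j < N)
    (hpq : (p, q) ≠ (0, 0)) : IsCluster ξ N (clusterIdeal N j p q) := by
  have hker := clusterMap_eq_zero_iff hξ hj1 hj hpq
  refine ⟨fun f hf => (hker _).1 ?_, ?_⟩
  · rw [clusterMap_cycAct2 hξ.pow_eq_one, (hker f).2 hf, mul_zero]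
  refine ⟨(Submodule.Quotient.restrictScalarsEquiv ℂ _).symm ≪≫ₗ
    Submodule.quotEquivOfEq _ _ (by ext f; exact (hker f).symm) ≪≫ₗ
    (clusterMap ξ N j p q).quotKerEquivOfSurjective (clusterMap_surjective hξ hj hpq),
    fun f => clusterMap_cycAct2 hξ.pow_eq_one f⟩

end ClusterIdeal

lemma X1_pow_succ_mem_of_X0_pow_not_mem {I : Ideal 𝒫} {N j : ℕ} {p q : ℂ} (hj : 1 ≤ j)
    (hpq : (p, q) ≠ (0, 0)) (hxy : X 0 * X 1 ∈ I)
    (hrel : C p * X 0 ^ j - C q * X 1 ^ (N - j) ∈ I) (hx : X 0 ^ j ∉ I) :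
    X 1 ^ (N - j + 1) ∈ I := by
  have hq : q ≠ 0 := by
    rintro rfl
    have hp : p ≠ 0 := fun hp => hpq (by simp [hp])
    exact hx ((Ideal.unit_mul_mem_iff_mem I ((Ne.isUnit hp).map C)).1 (by simpa using hrel))
  refine (Ideal.unit_mul_mem_iff_mem I ((Ne.isUnit hq).map C)).1 ?_
  obtain ⟨i, rfl⟩ : ∃ i, j = i + 1 := ⟨j - 1, by omega⟩
  have : (C q * X 1 ^ (N - (i + 1) + 1) : 𝒫) = C p * X 0 ^ i * (X 0 * X 1) -
      X 1 * (C p * X 0 ^ (i + 1) - C q * X 1 ^ (N - (i + 1))) := by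
    ring
  rw [this]
  exact sub_mem (Ideal.mul_mem_left _ _ hxy) (Ideal.mul_mem_left _ _ hrel)

namespace IsCluster

variable {ξ : ℂ} {N : ℕ} [NeZero N] {I : Ideal 𝒫}

lemma exists_smul_sub_smul_mem (h : IsCluster ξ N I) {f f' : 𝒫} {c : ℂ}
    (hf : cycAct2 ξ f = c • f) (hf' : cycAct2 ξ f' = c • f') :
    ∃ α β : ℂ, (α, β) ≠ (0, 0) ∧ α • f - β • f' ∈ I := by
  obtain ⟨-, e, he⟩ := h
  let φ : 𝒫 →ₗ[ℂ] AddMonoidAlgebra ℂ (ZMod N) :=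
    e.toLinearMap ∘ₗ (Ideal.Quotient.mkₐ ℂ I).toLinearMap
  have eigen {g : 𝒫} (hg : cycAct2 ξ g = c • g) : single 1 1 * φ g = c • φ g := by
    rw [← map_smul, ← hg]
    exact (he g).symm
  obtain ⟨α, β, hαβ, hrel⟩ := exists_smul_eq_smul_of_single_one_mul_eq_smul (eigen hf) (eigen hf')
  refine ⟨α, β, hαβ, ?_⟩
  rw [← Ideal.Quotient.eq_zero_iff_mem, ← Ideal.Quotient.mkₐ_eq_mk ℂ, ← e.map_eq_zero_iff]
  change φ (α • f - β • f') = 0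
  rw [map_sub, map_smul, map_smul, hrel, sub_self]

lemma mem_of_cycAct2_eq_self (h : IsCluster ξ N I)
    (hI : I ≤ Ideal.span (Set.range (X : Fin 2 → 𝒫))) {f : 𝒫} (hf : cycAct2 ξ f = f)
    (h0 : constantCoeff f = 0) : f ∈ I := by
  obtain ⟨α, β, hαβ, hmem⟩ :=
    h.exists_smul_sub_smul_mem (c := 1) (f' := 1) (by rwa [one_smul]) (by simp)
  have hβ : β = 0 := by simpa [h0] using constantCoeff_eq_zero_of_mem_span_X (hI hmem)
  have hα : α ≠ 0 := fun hα => hαβ (by simp [hα, hβ])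
  simpa [hβ, smul_smul, inv_mul_cancel₀ hα] using I.smul_of_tower_mem α⁻¹ hmem

lemma X_pow_mul_X_pow_mem_of_pow_mul_inv_pow_eq_one (h : IsCluster ξ N I)
    (hI : I ≤ Ideal.span (Set.range (X : Fin 2 → 𝒫))) {a b : ℕ} (hab : ξ ^ a * ξ⁻¹ ^ b = 1)
    (h0 : a ≠ 0 ∨ b ≠ 0) : X 0 ^ a * X 1 ^ b ∈ I :=
  h.mem_of_cycAct2_eq_self hI (by rw [cycAct2_X_pow_mul_X_pow, hab, one_smul]) (by simpa)

lemma exists_C_mul_sub_C_mul_mem (h : IsCluster ξ N I) (hξ : ξ ^ N = 1) {j : ℕ} (hj : j ≤ N) :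
    ∃ p q : ℂ, (p, q) ≠ (0, 0) ∧ C p * X 0 ^ j - C q * X 1 ^ (N - j) ∈ I := by
  simpa [smul_eq_C_mul] using h.exists_smul_sub_smul_mem (f := X 0 ^ j) (f' := X 1 ^ (N - j))
    (c := ξ ^ j) (by simpa using cycAct2_X_pow_mul_X_pow ξ j 0)
    (by simpa [inv_pow_sub_eq_pow hξ hj] using cycAct2_X_pow_mul_X_pow ξ 0 (N - j))

lemma exists_clusterIdeal_le (h : IsCluster ξ N I) (hN : 2 ≤ N) (hξ : ξ ^ N = 1)
    (hI : I ≤ Ideal.span (Set.range (X : Fin 2 → 𝒫))) :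
    ∃ j, 1 ≤ j ∧ j ≤ N - 1 ∧ ∃ p q : ℂ, (p, q) ≠ (0, 0) ∧ clusterIdeal N j p q ≤ I := by
  have hξ0 : ξ ≠ 0 := by rintro rfl; simp [zero_pow (NeZero.ne N)] at hξ
  have hxy : X 0 * X 1 ∈ I := by
    simpa using h.X_pow_mul_X_pow_mem_of_pow_mul_inv_pow_eq_one hI (a := 1) (b := 1)
      (by simp [hξ0]) (by simp)
  have hxN : X 0 ^ N ∈ I := by
    simpa using h.X_pow_mul_X_pow_mem_of_pow_mul_inv_pow_eq_one hI (a := N) (b := 0)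
      (by simp [hξ]) (by simp [NeZero.ne])
  have hyN : X 1 ^ N ∈ I := by
    simpa using h.X_pow_mul_X_pow_mem_of_pow_mul_inv_pow_eq_one hI (a := 0) (b := N)
      (by simp [hξ]) (by simp [NeZero.ne])
  have hex : ∃ k, X 0 ^ (k + 2) ∈ I := ⟨N - 2, by rwa [Nat.sub_add_cancel hN]⟩
  classical
  -- `j = k + 1` is the least positive exponent with `xʲ⁺¹ ∈ I`
  set k := Nat.find hex
  have hkN : k ≤ N - 2 := Nat.find_le (by rwa [Nat.sub_add_cancel hN])
  obtain ⟨p, q, hpq, hrel⟩ := h.exists_C_mul_sub_C_mul_mem hξ (j := k + 1) (by omega)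
  have hy : X 1 ^ (N - (k + 1) + 1) ∈ I := by
    rcases Nat.eq_zero_or_pos k with hk0 | hk0
    · rwa [hk0, show N - (0 + 1) + 1 = N by omega]
    refine X1_pow_succ_mem_of_X0_pow_not_mem (by omega) hpq hxy hrel ?_
    simpa [show k - 1 + 2 = k + 1 by omega] using Nat.find_min hex (show k - 1 < k by omega)
  refine ⟨k + 1, by omega, by omega, p, q, hpq, Ideal.span_le.2 ?_⟩
  simp only [Set.insert_subset_iff, Set.singleton_subset_iff, SetLike.mem_coe]
  exact ⟨hrel, hxy, Nat.find_spec hex, hy⟩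

lemma eq_of_le {J : Ideal 𝒫} (hJ : IsCluster ξ N J) (hI : IsCluster ξ N I) (hJI : J ≤ I) :
    J = I := by
  obtain ⟨-, eJ, -⟩ := hJ
  obtain ⟨-, eI, -⟩ := hI
  have : FiniteDimensional ℂ (𝒫 ⧸ J) := eJ.symm.finiteDimensional
  exact Ideal.eq_of_le_of_finrank_quotient_eq hJI (by rw [eJ.finrank_eq, eI.finrank_eq])

end IsCluster

theorem isCluster_iff_exists_eq_clusterIdeal {ξ : ℂ} {N : ℕ} (hN : 2 ≤ N)
    (hξ : IsPrimitiveRoot ξ N) {I : Ideal 𝒫} (hI : I ≤ Ideal.span (Set.range (X : Fin 2 → 𝒫))) :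
    IsCluster ξ N I ↔
      ∃ j, 1 ≤ j ∧ j ≤ N - 1 ∧ ∃ p q : ℂ, (p, q) ≠ (0, 0) ∧ I = clusterIdeal N j p q := by
  have : NeZero N := ⟨by omega⟩
  constructor
  · intro h
    obtain ⟨j, hj1, hj, p, q, hpq, hle⟩ := h.exists_clusterIdeal_le hN hξ.pow_eq_one hI
    exact ⟨j, hj1, hj, p, q, hpq,
      ((isCluster_clusterIdeal hξ hj1 (by omega) hpq).eq_of_le h hle).symm⟩
  · rintro ⟨j, hj1, hj, p, q, hpq, rfl⟩
    exact isCluster_clusterIdeal hξ hj1 (by omega) hpq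

/-- For the binary cyclic group `C̃_n ≅ ℤ/2nℤ` acting on `ℂ[x,y]` with generator
`x ↦ ξx`, `y ↦ ξ⁻¹y` (`ξ` a primitive `2n`-th root of unity), an ideal `I ⊆ ⟨x,y⟩` is a
`C̃_n`-cluster (stable under the action, with `ℂ[x,y]/I` isomorphic as a module over the
group algebra to the regular representation `ℂ[ℤ/2nℤ]`) iff it has the form
`⟨p·xʲ - q·y^{2n-j}, xy, x^{j+1}, y^{2n-j+1}⟩` for some `1 ≤ j ≤ 2n-1` and
`(p,q) ≠ (0,0)`. -/
theorem stmt16 (n : ℕ) (hn : 1 ≤ n) (ξ : ℂ) (hξ : IsPrimitiveRoot ξ (2 * n))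
    (I : Ideal (MvPolynomial (Fin 2) ℂ))
    (hI : I ≤ Ideal.span (Set.range (X : Fin 2 → MvPolynomial (Fin 2) ℂ))) :
    ((∀ f ∈ I, cycAct2 ξ f ∈ I) ∧
      ∃ e : (MvPolynomial (Fin 2) ℂ ⧸ I) ≃ₗ[ℂ] AddMonoidAlgebra ℂ (ZMod (2 * n)),
        ∀ f : MvPolynomial (Fin 2) ℂ,
          e (Ideal.Quotient.mk I (cycAct2 ξ f)) =
            AddMonoidAlgebra.single (1 : ZMod (2 * n)) (1 : ℂ) * e (Ideal.Quotient.mk I f))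
    ↔
    ∃ j : ℕ, 1 ≤ j ∧ j ≤ 2 * n - 1 ∧ ∃ p q : ℂ, (p, q) ≠ (0, 0) ∧
      I = Ideal.span {C p * X 0 ^ j - C q * X 1 ^ (2 * n - j), X 0 * X 1,
        X 0 ^ (j + 1), X 1 ^ (2 * n - j + 1)} :=
  isCluster_iff_exists_eq_clusterIdeal (by omega) hξ hI
end
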